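/- The Kohn–Strang integrand fails to be convex but its nontrivial relaxation is still bounded below by its convexification: for W : ℝ² → ℝ defined by W(ξ) = 1 + |ξ|² if ξ ≠ 0 and W(0) = 0, the convex envelope is W**(ξ) = 2|ξ| for |ξ| ≤ 1 and W**(ξ) = 1 + |ξ|² for |ξ| ≥ 1. -/
import Mathlib


open scoped Classical

/-- The Kohn–Strang integrand: `W(ξ) = 1 + |ξ|²` for `ξ ≠ 0`, `W(0) = 0`. -/
noncomputable def kohnStrang (ξ : EuclideanSpace ℝ (Fin 2)) : ℝ :=
  if ξ = 0 then 0 else 1 + ‖ξ‖ ^ 2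

/-- Its claimed convex envelope: `2|ξ|` for `|ξ| ≤ 1` and `1 + |ξ|²` for `|ξ| ≥ 1`. -/
noncomputable def kohnStrangEnvelope (ξ : EuclideanSpace ℝ (Fin 2)) : ℝ :=
  if ‖ξ‖ ≤ 1 then 2 * ‖ξ‖ else 1 + ‖ξ‖ ^ 2

/-- The one-dimensional profile of the envelope. -/
noncomputable def ksPhi (r : ℝ) : ℝ := 2 * r + (max (r - 1) 0) ^ 2

lemma ksPhi_convex : ConvexOn ℝ Set.univ ksPhi := by
  have h1 : ConvexOn ℝ Set.univ (fun r : ℝ => 2 * r) :=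
    (convexOn_id convex_univ).smul (by norm_num)
  have h2 : ConvexOn ℝ Set.univ (fun r : ℝ => max (r - 1) 0) := by
    have : ConvexOn ℝ Set.univ (fun r : ℝ => r - 1) :=
      (convexOn_id convex_univ).sub (concaveOn_const 1 convex_univ)
    exact this.sup (convexOn_const 0 convex_univ)
  have h3 : ConvexOn ℝ Set.univ ((fun r : ℝ => max (r - 1) 0) ^ 2) :=
    h2.pow (fun x _ => le_max_right _ _) 2
  have heq : ksPhi = (fun r : ℝ => 2 * r) + (fun r : ℝ => max (r - 1) 0) ^ 2 := by
    funext r; simp [ksPhi]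
  rw [heq]; exact h1.add h3

lemma ksPhi_mono : Monotone ksPhi := by
  intro a b hab
  unfold ksPhi
  have h0 : (0:ℝ) ≤ max (a - 1) 0 := le_max_right _ _
  have h1 : max (a - 1) 0 ≤ max (b - 1) 0 := max_le_max (by linarith) le_rfl
  have := pow_le_pow_left₀ h0 h1 2
  linarith

lemma envelope_eq (ξ : EuclideanSpace ℝ (Fin 2)) : kohnStrangEnvelope ξ = ksPhi ‖ξ‖ := by
  unfold kohnStrangEnvelope ksPhi
  rcases le_or_gt ‖ξ‖ 1 with h | h
  · rw [if_pos h, max_eq_right (by linarith)]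
    ring
  · rw [if_neg (not_le.2 h), max_eq_left (by linarith)]
    ring

lemma norm_image : (fun ξ : EuclideanSpace ℝ (Fin 2) => ‖ξ‖) '' Set.univ = Set.Ici 0 := by
  apply Set.Subset.antisymm
  · rintro r ⟨ξ, -, rfl⟩
    exact norm_nonneg ξ
  · intro r hr
    refine ⟨EuclideanSpace.single 0 r, Set.mem_univ _, ?_⟩
    show ‖EuclideanSpace.single (0 : Fin 2) r‖ = r
    rw [EuclideanSpace.norm_single]
    exact abs_of_nonneg hr

lemma envelope_convex : ConvexOn ℝ Set.univ kohnStrangEnvelope := by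
  have hcomp : ConvexOn ℝ Set.univ (ksPhi ∘ fun ξ : EuclideanSpace ℝ (Fin 2) => ‖ξ‖) := by
    apply ConvexOn.comp
    · rw [norm_image]
      exact ksPhi_convex.subset (Set.subset_univ _) (convex_Ici 0)
    · exact convexOn_univ_norm
    · exact ksPhi_mono.monotoneOn _
  have : kohnStrangEnvelope = ksPhi ∘ fun ξ : EuclideanSpace ℝ (Fin 2) => ‖ξ‖ := by
    funext ξ; exact envelope_eq ξ
  rw [this]; exact hcomp

/-- The Kohn–Strang integrand is not convex, and `kohnStrangEnvelope` is its convex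
envelope (the largest convex function below it). -/
theorem kohnStrang_convex_envelope :
    ¬ ConvexOn ℝ Set.univ kohnStrang ∧
    ConvexOn ℝ Set.univ kohnStrangEnvelope ∧
    (∀ ξ, kohnStrangEnvelope ξ ≤ kohnStrang ξ) ∧
    ∀ g : EuclideanSpace ℝ (Fin 2) → ℝ, ConvexOn ℝ Set.univ g →
      (∀ ξ, g ξ ≤ kohnStrang ξ) → ∀ ξ, g ξ ≤ kohnStrangEnvelope ξ := by
  refine ⟨?_, envelope_convex, ?_, ?_⟩
  · -- not convex
    intro h
    set e : EuclideanSpace ℝ (Fin 2) := EuclideanSpace.single 0 1 with he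
    have hne : ‖e‖ = 1 := by rw [he, EuclideanSpace.norm_single]; norm_num
    have key := h.2 (Set.mem_univ (0 : EuclideanSpace ℝ (Fin 2))) (Set.mem_univ e)
      (by norm_num : (0:ℝ) ≤ 1/2) (by norm_num : (0:ℝ) ≤ 1/2) (by norm_num)
    have hmid : (1/2 : ℝ) • (0 : EuclideanSpace ℝ (Fin 2)) + (1/2 : ℝ) • e = (1/2 : ℝ) • e := by
      rw [smul_zero, zero_add]
    rw [hmid] at key
    have hn : ‖(1/2 : ℝ) • e‖ = 1/2 := by
      rw [norm_smul, hne]; norm_num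
    have hmne : (1/2 : ℝ) • e ≠ 0 := by
      intro h0
      rw [h0, norm_zero] at hn
      norm_num at hn
    have hene : e ≠ 0 := by
      intro h0; rw [h0, norm_zero] at hne; norm_num at hne
    rw [kohnStrang, if_neg hmne, hn, kohnStrang, if_pos rfl, kohnStrang, if_neg hene, hne] at key
    norm_num at key
  · -- envelope ≤ W
    intro ξ
    by_cases h0 : ξ = 0
    · subst h0
      simp [kohnStrang, kohnStrangEnvelope]
    · rw [kohnStrang, if_neg h0, kohnStrangEnvelope]
      rcases le_or_gt ‖ξ‖ 1 with h | h
      · rw [if_pos h]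
        nlinarith [sq_nonneg (‖ξ‖ - 1)]
      · rw [if_neg (not_le.2 h)]
  · -- maximality
    intro g hg hgW ξ
    rw [kohnStrangEnvelope]
    rcases le_or_gt ‖ξ‖ 1 with h | h
    · rw [if_pos h]
      by_cases h0 : ξ = 0
      · subst h0
        have := hgW 0
        rw [kohnStrang, if_pos rfl] at this
        simpa using this
      · have hpos : 0 < ‖ξ‖ := norm_pos_iff.2 h0
        set t : ℝ := ‖ξ‖ with ht
        set η : EuclideanSpace ℝ (Fin 2) := ‖ξ‖⁻¹ • ξ with hη
        have hηn : ‖η‖ = 1 := by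
          rw [hη, norm_smul, norm_inv, norm_norm, inv_mul_cancel₀ hpos.ne']
        have hξ : (1 - t) • (0 : EuclideanSpace ℝ (Fin 2)) + t • η = ξ := by
          rw [smul_zero, zero_add, hη, smul_smul, ht, mul_inv_cancel₀ hpos.ne', one_smul]
        have key := hg.2 (Set.mem_univ (0 : EuclideanSpace ℝ (Fin 2))) (Set.mem_univ η)
          (by linarith : (0:ℝ) ≤ 1 - t) hpos.le (by ring)
        rw [hξ] at key
        have hg0 : g 0 ≤ 0 := by
          have := hgW 0; rwa [kohnStrang, if_pos rfl] at this
        have hgη : g η ≤ 2 := by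
          have := hgW η
          have hηne : η ≠ 0 := by
            intro h0; rw [h0, norm_zero] at hηn; norm_num at hηn
          rw [kohnStrang, if_neg hηne, hηn] at this
          norm_num at this
          linarith
        calc g ξ ≤ (1 - t) * g 0 + t * g η := key
          _ ≤ (1 - t) * 0 + t * 2 := by
              apply add_le_add
              · exact mul_le_mul_of_nonneg_left hg0 (by linarith)
              · exact mul_le_mul_of_nonneg_left hgη hpos.le
          _ = 2 * ‖ξ‖ := by rw [ht]; ring
    · rw [if_neg (not_le.2 h)]
      have hne : ξ ≠ 0 := by
        intro h0; rw [h0, norm_zero] at h; norm_num at h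
      have := hgW ξ
      rwa [kohnStrang, if_neg hne] at this
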